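/- Let F : EuclideanSpace ℝ (Fin d) → ℝ be differentiable with ∇F L-Lipschitz. Let γ ≥ 1, σ > 0, ε > 0, η ≥ 0, and let w, g₀, u₀, u ∈ EuclideanSpace ℝ (Fin d) with w' = w − η·g₀. Suppose: (i) ‖u₀ − ∇F(w)‖ ≤ √d·σ and ‖u − ∇F(w')‖ ≤ √d·σ; (ii) (1+γ)·L·η·‖g₀‖ ≤ ε·√d·σ; (iii) (3 + 2γ + ε)·√d·σ < ‖∇F(w')‖; and (iv) g̃ is the average of a nonempty finite family of vectors each satisfying the selection rule with parameter γ relative to u₀ and u, i.e., |[g_i]_j − [u₀]_j| ≤ γ·|[u]_j − [u₀]_j| for every coordinate j. Then ⟨g̃, ∇F(w')⟩ ≥ (1 − (3 + 2γ + ε)·√d·σ/‖∇F(w')‖)·‖∇F(w')‖² > 0. -/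

import Mathlib

/-!
Each selected gradient lies within `γ‖u - u₀‖` of `u₀`, and by the triangle inequality through
`∇F(w)` both `‖u - u₀‖` and `‖u₀ - ∇F(w')‖` are controlled by `√d·σ` plus the drift
`‖∇F(w) - ∇F(w')‖ ≤ Lη‖g₀‖`; the smallness condition on `η` absorbs the drift, so every selected
gradient, hence by convexity of balls also their average `g̃`, lies within `(3 + 2γ + ε)√d·σ` of
`∇F(w')`. Cauchy–Schwarz then gives `⟪g̃, ∇F(w')⟫ ≥ ‖∇F(w')‖² - (3 + 2γ + ε)√d·σ‖∇F(w')‖`.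
-/

open RealInnerProductSpace

theorem EuclideanSpace.norm_le_mul_norm_of_abs_le {ι : Type*} [Fintype ι]
    {v w : EuclideanSpace ℝ ι} {c : ℝ} (hc : 0 ≤ c) (h : ∀ j, |v j| ≤ c * |w j|) :
    ‖v‖ ≤ c * ‖w‖ := by
  rw [← sq_le_sq₀ (norm_nonneg _) (by positivity), mul_pow, EuclideanSpace.norm_sq_eq,
    EuclideanSpace.norm_sq_eq, Finset.mul_sum]
  gcongr with j
  simp only [Real.norm_eq_abs, ← mul_pow]
  exact pow_le_pow_left₀ (abs_nonneg _) (h j) 2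

def LicmSelects {ι : Type*} (γ : ℝ) (u₀ u g : EuclideanSpace ℝ ι) : Prop :=
  ∀ j, |g j - u₀ j| ≤ γ * |u j - u₀ j|

theorem LicmSelects.norm_sub_le {ι : Type*} [Fintype ι] {γ : ℝ} {u₀ u g : EuclideanSpace ℝ ι}
    (h : LicmSelects γ u₀ u g) (hγ : 0 ≤ γ) : ‖g - u₀‖ ≤ γ * ‖u - u₀‖ :=
  EuclideanSpace.norm_le_mul_norm_of_abs_le hγ h

theorem norm_sub_le_of_norm_sub_le_mul_norm_sub {E : Type*} [SeminormedAddCommGroup E]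
    {γ D δ : ℝ} {g u₀ u a b : E}
    (hg : ‖g - u₀‖ ≤ γ * ‖u - u₀‖) (hγ : 0 ≤ γ)
    (hu₀ : ‖u₀ - a‖ ≤ D) (hu : ‖u - b‖ ≤ D) (hab : ‖a - b‖ ≤ δ) :
    ‖g - b‖ ≤ (1 + 2 * γ) * D + (1 + γ) * δ := by
  have hu₀b : ‖u₀ - b‖ ≤ D + δ :=
    (norm_sub_le_norm_sub_add_norm_sub u₀ a b).trans (add_le_add hu₀ hab)
  have huu₀ : ‖u - u₀‖ ≤ 2 * D + δ := by
    calc ‖u - u₀‖ ≤ ‖u - b‖ + ‖b - u₀‖ := norm_sub_le_norm_sub_add_norm_sub u b u₀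
      _ ≤ D + (D + δ) := add_le_add hu (by rwa [norm_sub_rev])
      _ = 2 * D + δ := by ring
  calc ‖g - b‖ ≤ ‖g - u₀‖ + ‖u₀ - b‖ := norm_sub_le_norm_sub_add_norm_sub g u₀ b
    _ ≤ γ * (2 * D + δ) + (D + δ) :=
      add_le_add (hg.trans (mul_le_mul_of_nonneg_left huu₀ hγ)) hu₀b
    _ = (1 + 2 * γ) * D + (1 + γ) * δ := by ring

theorem norm_inv_card_smul_sum_sub_le {ι E : Type*} [SeminormedAddCommGroup E]
    [NormedSpace ℝ E] {T : Finset ι} (hT : T.Nonempty) {g : ι → E} {x : E} {r : ℝ}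
    (h : ∀ i ∈ T, ‖g i - x‖ ≤ r) : ‖(T.card : ℝ)⁻¹ • ∑ i ∈ T, g i - x‖ ≤ r := by
  have hcard : (T.card : ℝ) ≠ 0 := by exact_mod_cast hT.card_pos.ne'
  rw [← mem_closedBall_iff_norm, Finset.smul_sum]
  refine (convex_closedBall x r).sum_mem (fun _ _ => by positivity) ?_
    (fun i hi => mem_closedBall_iff_norm.mpr (h i hi))
  rw [Finset.sum_const, nsmul_eq_mul, mul_inv_cancel₀ hcard]

theorem norm_sq_sub_mul_norm_le_real_inner {E : Type*} [NormedAddCommGroup E]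
    [InnerProductSpace ℝ E] {x y : E} {r : ℝ} (h : ‖x - y‖ ≤ r) :
    ‖y‖ ^ 2 - r * ‖y‖ ≤ ⟪x, y⟫ := by
  have hcs : -(‖x - y‖ * ‖y‖) ≤ ⟪x - y, y⟫ := (abs_le.mp (abs_real_inner_le_norm _ _)).1
  have hr : ‖x - y‖ * ‖y‖ ≤ r * ‖y‖ := mul_le_mul_of_nonneg_right h (norm_nonneg _)
  rw [inner_sub_left, real_inner_self_eq_norm_sq] at hcs
  linarith

theorem licm_byzantine_resilience_inner_product_general
    {ι : Type*} (d : ℕ) (F : EuclideanSpace ℝ (Fin d) → ℝ) (L : ℝ)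
    (hLip : ∀ x y : EuclideanSpace ℝ (Fin d),
      ‖gradient F x - gradient F y‖ ≤ L * ‖x - y‖)
    (γ σ ε η : ℝ) (hγ : 1 ≤ γ) (hη : 0 ≤ η)
    (w g₀ u₀ u : EuclideanSpace ℝ (Fin d))
    (w' : EuclideanSpace ℝ (Fin d)) (hw' : w' = w - η • g₀)
    (hu₀ : ‖u₀ - gradient F w‖ ≤ Real.sqrt d * σ)
    (hu : ‖u - gradient F w'‖ ≤ Real.sqrt d * σ)
    (hsmall : (1 + γ) * L * η * ‖g₀‖ ≤ ε * (Real.sqrt d * σ))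
    (hgrad : (3 + 2 * γ + ε) * (Real.sqrt d * σ) < ‖gradient F w'‖)
    (T : Finset ι) (hT : T.Nonempty) (g : ι → EuclideanSpace ℝ (Fin d))
    (hsel : ∀ i ∈ T, ∀ j : Fin d, |g i j - u₀ j| ≤ γ * |u j - u₀ j|)
    (gt : EuclideanSpace ℝ (Fin d))
    (hgt : gt = (T.card : ℝ)⁻¹ • ∑ i ∈ T, g i) :
    (1 - (3 + 2 * γ + ε) * (Real.sqrt d * σ) / ‖gradient F w'‖)
        * ‖gradient F w'‖ ^ 2 ≤ ⟪gt, gradient F w'⟫ ∧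
    0 < (1 - (3 + 2 * γ + ε) * (Real.sqrt d * σ) / ‖gradient F w'‖)
        * ‖gradient F w'‖ ^ 2 := by
  set D := Real.sqrt d * σ
  set G := gradient F w'
  have hγ₀ : 0 ≤ γ := by linarith
  have hD : 0 ≤ D := (norm_nonneg _).trans hu
  have hstep : ‖w - w'‖ = η * ‖g₀‖ := by
    rw [hw', sub_sub_cancel, norm_smul, Real.norm_of_nonneg hη]
  have hdrift : ‖gradient F w - G‖ ≤ L * η * ‖g₀‖ := by
    simpa only [hstep, mul_assoc] using hLip w w'
  have hsel_near : ∀ i ∈ T, ‖g i - G‖ ≤ (3 + 2 * γ + ε) * D := fun i hi => by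
    have := norm_sub_le_of_norm_sub_le_mul_norm_sub
      (LicmSelects.norm_sub_le (hsel i hi) hγ₀) hγ₀ hu₀ hu hdrift
    linarith
  have hgt_near : ‖gt - G‖ ≤ (3 + 2 * γ + ε) * D :=
    hgt ▸ norm_inv_card_smul_sum_sub_le hT hsel_near
  have hG : 0 < ‖G‖ := ((norm_nonneg _).trans hgt_near).trans_lt hgrad
  have hexpand : (1 - (3 + 2 * γ + ε) * D / ‖G‖) * ‖G‖ ^ 2
      = ‖G‖ * (‖G‖ - (3 + 2 * γ + ε) * D) := by
    field_simp
  rw [hexpand]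
  refine ⟨?_, mul_pos hG (sub_pos.mpr hgrad)⟩
  linarith [norm_sq_sub_mul_norm_le_real_inner hgt_near]

/-- Deterministic core of Theorem 1 (Byzantine resilience) of the LICM-SGD paper:
under the stated deviation bounds, the screened-and-averaged aggregate `g̃` makes a
positive inner product with the true gradient at the new iterate, with
`sin α = (3 + 2γ + ε)√d·σ / ‖∇F(w')‖`. -/
theorem licm_byzantine_resilience_inner_product
    {ι : Type*} (d : ℕ) (F : EuclideanSpace ℝ (Fin d) → ℝ) (L : ℝ)
    (hF : Differentiable ℝ F)
    (hLip : ∀ x y : EuclideanSpace ℝ (Fin d),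
      ‖gradient F x - gradient F y‖ ≤ L * ‖x - y‖)
    (γ σ ε η : ℝ) (hγ : 1 ≤ γ) (hσ : 0 < σ) (hε : 0 < ε) (hη : 0 ≤ η)
    (w g₀ u₀ u : EuclideanSpace ℝ (Fin d))
    (w' : EuclideanSpace ℝ (Fin d)) (hw' : w' = w - η • g₀)
    (hu₀ : ‖u₀ - gradient F w‖ ≤ Real.sqrt d * σ)
    (hu : ‖u - gradient F w'‖ ≤ Real.sqrt d * σ)
    (hsmall : (1 + γ) * L * η * ‖g₀‖ ≤ ε * (Real.sqrt d * σ))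
    (hgrad : (3 + 2 * γ + ε) * (Real.sqrt d * σ) < ‖gradient F w'‖)
    (T : Finset ι) (hT : T.Nonempty) (g : ι → EuclideanSpace ℝ (Fin d))
    (hsel : ∀ i ∈ T, ∀ j : Fin d, |g i j - u₀ j| ≤ γ * |u j - u₀ j|)
    (gt : EuclideanSpace ℝ (Fin d))
    (hgt : gt = (T.card : ℝ)⁻¹ • ∑ i ∈ T, g i) :
    (1 - (3 + 2 * γ + ε) * (Real.sqrt d * σ) / ‖gradient F w'‖)
        * ‖gradient F w'‖ ^ 2 ≤ ⟪gt, gradient F w'⟫ ∧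
    0 < (1 - (3 + 2 * γ + ε) * (Real.sqrt d * σ) / ‖gradient F w'‖)
        * ‖gradient F w'‖ ^ 2 :=
  licm_byzantine_resilience_inner_product_general d F L hLip γ σ ε η hγ hη w g₀ u₀ u w' hw' hu₀ hu
    hsmall hgrad T hT g hsel gt hgt
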